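/- Let α > 0 and z_n = √n · e^{2πi α √n} ∈ ℂ. Then the point set {z_n : n ≥ 1} is relatively dense in ℂ: there exists ρ > 0 such that every closed ball of radius ρ in ℂ contains at least one point z_n. -/

import Mathlib

open Filter Topology MeasureTheory

lemma exp_mul_I_sub_one_abs_le (t : ℝ) :
    ‖Complex.exp (t * Complex.I) - 1‖ ≤ |t| := by
  have hre : (Complex.exp (t * Complex.I) - 1).re = Real.cos t - 1 := by
    simp [Complex.exp_ofReal_mul_I_re]
  have him : (Complex.exp (t * Complex.I) - 1).im = Real.sin t := by
    simp [Complex.exp_ofReal_mul_I_im]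
  have hsq : ‖Complex.exp (t * Complex.I) - 1‖
      = Real.sqrt ((Real.cos t - 1)^2 + (Real.sin t)^2) := by
    rw [Complex.norm_def, Complex.normSq_apply, hre, him]
    ring_nf
  rw [hsq]
  have h1 : (Real.cos t - 1)^2 + (Real.sin t)^2 ≤ t^2 := by
    have h2 : Real.cos (2 * (t/2)) = 2 * Real.cos (t/2)^2 - 1 := Real.cos_two_mul (t/2)
    rw [show 2 * (t/2) = t by ring] at h2
    have h5 := Real.sin_sq_add_cos_sq (t/2)
    have h3 : Real.sin (t/2)^2 ≤ (t/2)^2 := Real.sin_sq_le_sq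
    have h4 := Real.sin_sq_add_cos_sq t
    nlinarith
  calc Real.sqrt ((Real.cos t - 1)^2 + (Real.sin t)^2) ≤ Real.sqrt (t^2) :=
        Real.sqrt_le_sqrt h1
    _ = |t| := Real.sqrt_sq_eq_abs t

lemma exp_mul_I_sub_exp_mul_I_abs_le (a b : ℝ) :
    ‖Complex.exp (a * Complex.I) - Complex.exp (b * Complex.I)‖ ≤ |a - b| := by
  have : Complex.exp (a * Complex.I) - Complex.exp (b * Complex.I)
      = Complex.exp (b * Complex.I) * (Complex.exp ((a - b : ℝ) * Complex.I) - 1) := by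
    rw [mul_sub, ← Complex.exp_add, mul_one]
    push_cast
    ring_nf
  rw [this, norm_mul, Complex.norm_exp_ofReal_mul_I, one_mul]
  exact exp_mul_I_sub_one_abs_le _

/-- The point `z_n = √n · e^{2πi ξ_n}` in the complex plane. -/
noncomputable def zseq (ξ : ℕ → ℝ) (n : ℕ) : ℂ :=
  (Real.sqrt n : ℂ) * Complex.exp (2 * Real.pi * Complex.I * (ξ n : ℂ))

lemma zseq_eq (ξ : ℕ → ℝ) (n : ℕ) :
    zseq ξ n = (Real.sqrt n : ℂ) * Complex.exp ((2 * Real.pi * ξ n : ℝ) * Complex.I) := by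
  unfold zseq
  push_cast
  ring_nf

/-- For any `α > 0`, the set `{√n · e^{2πiα√n} : n ≥ 1}` is relatively dense in `ℂ`. -/
theorem relatively_dense_sqrt (α : ℝ) (hα : 0 < α) :
    ∃ ρ : ℝ, 0 < ρ ∧ ∀ w : ℂ, ∃ n : ℕ, 1 ≤ n ∧
      ‖w - zseq (fun k => α * Real.sqrt k) n‖ ≤ ρ := by
  refine ⟨2 + 1/α + 7*α, by positivity, fun w => ?_⟩
  set r : ℝ := ‖w‖ with hr_def
  by_cases hr : r < 1
  · -- small case: take n = 1
    refine ⟨1, le_refl 1, ?_⟩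
    have habs : ‖zseq (fun k => α * Real.sqrt k) 1‖ = 1 := by
      rw [zseq_eq, norm_mul, Complex.norm_exp_ofReal_mul_I]
      simp
    calc ‖w - zseq (fun k => α * Real.sqrt k) 1‖
        ≤ ‖w‖ + ‖zseq (fun k => α * Real.sqrt k) 1‖ :=
          norm_sub_le w _
      _ = r + 1 := by rw [habs]
      _ ≤ 2 + 1/α + 7*α := by
          have : 0 < 1/α := by positivity
          nlinarith
  · push_neg at hr
    have hπ : (0:ℝ) < Real.pi := Real.pi_pos
    set θ : ℝ := w.arg / (2 * Real.pi) with hθ_def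
    have hθ : 2 * Real.pi * θ = w.arg := by
      rw [hθ_def]; field_simp [hπ.ne']
    set m : ℤ := ⌈α * r - θ⌉ with hm_def
    set x : ℝ := (θ + m) / α with hx_def
    have hax : α * x = θ + m := by rw [hx_def]; field_simp [hα.ne']
    have hrx : r ≤ x := by
      have h1 : α * r - θ ≤ m := Int.le_ceil _
      rw [hx_def]
      rw [le_div_iff₀ hα]
      linarith
    have hxr : x ≤ r + 1/α := by
      have h1 : (m:ℝ) < α * r - θ + 1 := Int.ceil_lt_add_one _
      rw [hx_def, div_le_iff₀ hα]
      have : (r + 1/α) * α = r * α + 1 := by field_simp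
      rw [this]
      nlinarith
    have hx1 : 1 ≤ x := le_trans hr hrx
    have hx0 : 0 < x := by linarith
    set n : ℕ := ⌈x^2⌉₊ with hn_def
    have hn1 : 1 ≤ n := by
      rw [hn_def]
      exact Nat.one_le_iff_ne_zero.mpr (by positivity)
    have hxn : x^2 ≤ (n:ℝ) := Nat.le_ceil _
    have hnx : (n:ℝ) ≤ x^2 + 1 := le_of_lt (Nat.ceil_lt_add_one (by positivity))
    set s : ℝ := Real.sqrt n with hs_def
    have hs0 : 0 ≤ s := Real.sqrt_nonneg _
    have hssq : s^2 = (n:ℝ) := Real.sq_sqrt (Nat.cast_nonneg n)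
    have hxs : x ≤ s := by nlinarith
    have hkey : s * (s - x) ≤ 1 := by nlinarith
    have hsx : s - x ≤ 1 := by nlinarith
    refine ⟨n, hn1, ?_⟩
    -- angles
    set a : ℝ := 2 * Real.pi * (θ + m) with ha_def
    set b : ℝ := 2 * Real.pi * (α * s) with hb_def
    have hw : w = (r:ℂ) * Complex.exp ((a:ℝ) * Complex.I) := by
      have h1 : Complex.exp ((a:ℝ) * Complex.I) = Complex.exp ((w.arg : ℝ) * Complex.I) := by
        have : (a:ℂ) * Complex.I = (w.arg : ℝ) * Complex.I + (m : ℤ) * (2 * Real.pi * Complex.I) := by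
          rw [ha_def]
          push_cast [← hθ]
          ring
        rw [this, Complex.exp_add, Complex.exp_int_mul_two_pi_mul_I, mul_one]
      rw [h1, Complex.norm_mul_exp_arg_mul_I]
    have hz : zseq (fun k => α * Real.sqrt k) n = (s:ℂ) * Complex.exp ((b:ℝ) * Complex.I) := by
      rw [zseq_eq]
    have hdecomp : w - zseq (fun k => α * Real.sqrt k) n
        = ((r:ℂ) - s) * Complex.exp ((a:ℝ) * Complex.I)
          + (s:ℂ) * (Complex.exp ((a:ℝ) * Complex.I) - Complex.exp ((b:ℝ) * Complex.I)) := by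
      rw [hw, hz]; ring
    rw [hdecomp]
    have hab : |a - b| = 2 * Real.pi * (α * (s - x)) := by
      have : a - b = -(2 * Real.pi * (α * (s - x))) := by
        rw [ha_def, hb_def, ← hax]; ring
      rw [this, abs_neg, abs_of_nonneg]
      have := sub_nonneg.mpr hxs
      positivity
    calc ‖((r:ℂ) - s) * Complex.exp ((a:ℝ) * Complex.I)
          + (s:ℂ) * (Complex.exp ((a:ℝ) * Complex.I) - Complex.exp ((b:ℝ) * Complex.I))‖
        ≤ ‖((r:ℂ) - s) * Complex.exp ((a:ℝ) * Complex.I)‖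
          + ‖(s:ℂ) * (Complex.exp ((a:ℝ) * Complex.I) - Complex.exp ((b:ℝ) * Complex.I))‖ :=
          norm_add_le _ _
      _ ≤ |r - s| + s * |a - b| := by
          rw [norm_mul, norm_mul, Complex.norm_exp_ofReal_mul_I, mul_one]
          gcongr
          · rw [show ((r:ℂ) - (s:ℂ)) = ((r - s : ℝ):ℂ) by push_cast; ring, Complex.norm_real, Real.norm_eq_abs]
          · rw [Complex.norm_real, Real.norm_eq_abs, abs_of_nonneg hs0]
          · exact exp_mul_I_sub_exp_mul_I_abs_le a b
      _ ≤ 2 + 1/α + 7*α := by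
          rw [hab]
          have h1 : |r - s| = s - r := by
            rw [abs_sub_comm, abs_of_nonneg]; linarith
          rw [h1]
          have h2 : s * (2 * Real.pi * (α * (s - x))) = 2 * Real.pi * α * (s * (s - x)) := by ring
          rw [h2]
          have hπ4 : Real.pi ≤ 3.5 := by linarith [Real.pi_lt_d2]
          have h5 : 0 ≤ s * (s - x) := mul_nonneg hs0 (by linarith)
          have h3 : 2 * Real.pi * α * (s * (s - x)) ≤ 7 * α := by
            nlinarith [mul_nonneg (mul_nonneg hα.le h5) (sub_nonneg.mpr hπ4),
              mul_nonneg hα.le (sub_nonneg.mpr hkey)]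
          have h4 : s - r ≤ 1 + 1/α := by
            have : s - r = (s - x) + (x - r) := by ring
            linarith
          have : 0 < 1/α := by positivity
          linarith
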